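/- Let V be a finite-dimensional ℂ(q)-vector space with a Hermitian inner product, and let B be an almost orthonormal basis of V (each b ∈ B satisfies lt(b) = 1 and (b,b') ∈ q⁻¹K_∞ for b ≠ b'). Then the K_∞-lattice L_V := { v ∈ V : (v,v) ∈ K_∞ } equals the K_∞-span of B. -/

import Mathlib

open Polynomial

noncomputable section

/-- `K = ℂ(q)`, with `RatFunc.X` playing the role of `q`. -/
abbrev Kq : Type := RatFunc ℂ

/-- The conjugation on `ℂ(q)` extending complex conjugation with `q* = q`. -/
noncomputable def qconj : Kq →+* Kq :=
  RatFunc.mapRingHom (Polynomial.mapRingHom (starRingEnd ℂ))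
    (by
      intro p hp
      simp only [Submonoid.mem_comap, mem_nonZeroDivisors_iff_ne_zero] at *
      simpa using hp)

/-- The leading coefficient `lc(c)` of a rational function. -/
noncomputable def lcoef (c : Kq) : ℂ := c.num.leadingCoeff / c.denom.leadingCoeff

/-- Membership in `K_∞`, the subring of rational functions regular at `q = ∞`:
those of degree `≤ 0`. -/
def memKinf (c : Kq) : Prop := c.intDegree ≤ 0

/-- Membership in `q⁻¹K_∞`: zero or degree `≤ −1`. -/
def memqinvKinf (c : Kq) : Prop := c = 0 ∨ c.intDegree ≤ -1

/-!
With `v∞` the valuation at `q = ∞`, `K_∞ = {v∞ ≤ 1}` and `q⁻¹K_∞ = {v∞ < 1}`, and evaluation at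
`q = ∞` is a ring map `K_∞ → ℂ` commuting with conjugation. For `v = ∑ cᵢ bᵢ` we have
`(v,v) = ∑ cᵢ c̄ⱼ (bᵢ,bⱼ)`, so `(v,v) ∈ K_∞` when all `cᵢ ∈ K_∞`. Conversely, if some `cᵢ ∉ K_∞`,
divide `v` by the coefficient `c_k` of largest valuation: the new coefficients lie in `K_∞`, so
`(v,v) / (c_k c̄_k)` evaluates at `∞` to `∑ |cᵢ(∞)|² ≥ 1`. Hence it has valuation `1`, and
`v∞ (v,v) = v∞ (c_k)² > 1`.
-/

open RatFunc

section ValuationAtInfinity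

open scoped Classical

local notation "v∞" => inftyValuation ℂ

lemma valuation_le_one_iff_memKinf {x : Kq} : v∞ x ≤ 1 ↔ memKinf x := by
  rcases eq_or_ne x 0 with rfl | hx
  · simp [memKinf]
  · simp [inftyValuation_apply, hx, memKinf, ← WithZero.exp_zero]

lemma valuation_lt_one_iff_memqinvKinf {x : Kq} : v∞ x < 1 ↔ memqinvKinf x := by
  rcases eq_or_ne x 0 with rfl | hx
  · simp [memqinvKinf]
  · simp only [inftyValuation_apply, inftyValuation_of_nonzero ℂ hx, memqinvKinf, hx, false_or,
      ← WithZero.exp_zero, WithZero.exp_lt_exp]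
    omega

lemma qconj_algebraMap_div (p q : ℂ[X]) :
    qconj (algebraMap ℂ[X] Kq p / algebraMap ℂ[X] Kq q) =
      algebraMap ℂ[X] Kq (p.map (starRingEnd ℂ)) / algebraMap ℂ[X] Kq (q.map (starRingEnd ℂ)) := by
  rw [qconj, coe_mapRingHom_eq_coe_map, map_apply_div]
  rfl

lemma qconj_C (c : ℂ) : qconj (RatFunc.C c) = RatFunc.C (starRingEnd ℂ c) := by
  simpa [← algebraMap_C] using qconj_algebraMap_div (Polynomial.C c) 1

lemma intDegree_qconj (x : Kq) : (qconj x).intDegree = x.intDegree := by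
  rcases eq_or_ne x 0 with rfl | hx
  · simp
  have hnum : x.num.map (starRingEnd ℂ) ≠ 0 := by simpa using num_ne_zero hx
  have hdenom : x.denom.map (starRingEnd ℂ) ≠ 0 := by simpa using denom_ne_zero x
  rw [← num_div_denom x, qconj_algebraMap_div, intDegree_div (by simpa using hnum)
    (by simpa using hdenom), intDegree_polynomial, intDegree_polynomial, natDegree_map,
    natDegree_map, num_div_denom, intDegree]

lemma valuation_qconj (x : Kq) : v∞ (qconj x) = v∞ x := by
  rcases eq_or_ne x 0 with rfl | hx
  · simp
  · rw [inftyValuation_apply, inftyValuation_apply, inftyValuation_of_nonzero ℂ hx,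
      inftyValuation_of_nonzero ℂ ((map_ne_zero qconj).mpr hx), intDegree_qconj]

lemma valuation_C_le_one (c : ℂ) : v∞ (RatFunc.C c) ≤ 1 := by
  rcases eq_or_ne c 0 with rfl | hc
  · simp
  · rw [inftyValuation.C ℂ hc]

lemma memKinf_mul {x y : Kq} (hx : memKinf x) (hy : memKinf y) : memKinf (x * y) := by
  rw [← valuation_le_one_iff_memKinf] at *
  rw [map_mul]
  exact mul_le_one' hx hy

lemma memKinf_sum {ι : Type*} {s : Finset ι} {f : ι → Kq} (hf : ∀ i ∈ s, memKinf (f i)) :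
    memKinf (∑ i ∈ s, f i) := by
  simp only [← valuation_le_one_iff_memKinf] at *
  exact Valuation.map_sum_le _ hf

lemma memKinf_qconj {x : Kq} (hx : memKinf x) : memKinf (qconj x) := by
  rwa [← valuation_le_one_iff_memKinf, valuation_qconj, valuation_le_one_iff_memKinf]

lemma valuation_sub_C_lcoef_lt_one {x : Kq} (hx : x.intDegree = 0) :
    v∞ (x - RatFunc.C (lcoef x)) < 1 := by
  rcases eq_or_ne x 0 with rfl | hx0
  · simp [lcoef]
  set P := x.num - Polynomial.C (lcoef x) * x.denom
  have hdenom : x.denom ≠ 0 := denom_ne_zero x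
  have hdeg : x.num.natDegree = x.denom.natDegree := by
    rw [intDegree] at hx; omega
  have hsub : x - RatFunc.C (lcoef x) = algebraMap ℂ[X] Kq P / algebraMap ℂ[X] Kq x.denom := by
    rw [map_sub, map_mul, algebraMap_C, sub_div, mul_div_cancel_right₀ _ (by simpa using hdenom),
      num_div_denom]
  rcases eq_or_ne P 0 with hP | hP
  · simp [hsub, hP]
  have hlc : lcoef x ≠ 0 :=
    div_ne_zero (leadingCoeff_ne_zero.mpr (num_ne_zero hx0)) (leadingCoeff_ne_zero.mpr hdenom)
  have hPdeg : P.natDegree < x.denom.natDegree := by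
    rw [← hdeg]
    refine natDegree_lt_natDegree hP (degree_sub_lt_left ?_ (num_ne_zero hx0) ?_)
    · rw [degree_C_mul hlc, degree_eq_natDegree (num_ne_zero hx0),
        degree_eq_natDegree hdenom, hdeg]
    · rw [leadingCoeff_C_mul_of_isUnit (IsUnit.mk0 _ hlc), lcoef,
        div_mul_cancel₀ _ (leadingCoeff_ne_zero.mpr hdenom)]
  rw [valuation_lt_one_iff_memqinvKinf, memqinvKinf, hsub,
    intDegree_div (by simpa using hP) (by simpa using hdenom), intDegree_polynomial,
    intDegree_polynomial]
  omega

lemma exists_valuation_sub_C_lt_one {x : Kq} (hx : memKinf x) :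
    ∃ c : ℂ, v∞ (x - RatFunc.C c) < 1 := by
  rcases (show x.intDegree < 0 ∨ x.intDegree = 0 by rw [memKinf] at hx; omega) with hneg | hzero
  · refine ⟨0, ?_⟩
    rw [map_zero, sub_zero, valuation_lt_one_iff_memqinvKinf, memqinvKinf]
    omega
  · exact ⟨lcoef x, valuation_sub_C_lcoef_lt_one hzero⟩

lemma eq_of_valuation_sub_C_lt_one {x : Kq} {c c' : ℂ} (hc : v∞ (x - RatFunc.C c) < 1)
    (hc' : v∞ (x - RatFunc.C c') < 1) : c = c' := by
  by_contra hne
  have h : v∞ (RatFunc.C (c' - c)) < 1 := by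
    rw [map_sub, ← sub_sub_sub_cancel_left _ _ x]
    exact Valuation.map_sub_lt _ hc hc'
  rw [inftyValuation.C ℂ (sub_ne_zero.mpr (Ne.symm hne))] at h
  exact lt_irrefl _ h

/-- The value `x(∞)` of `x ∈ K_∞` (junk value `0` outside `K_∞`). -/
noncomputable def evalInfty (x : Kq) : ℂ :=
  if hx : memKinf x then (exists_valuation_sub_C_lt_one hx).choose else 0

lemma valuation_sub_C_evalInfty_lt_one {x : Kq} (hx : memKinf x) :
    v∞ (x - RatFunc.C (evalInfty x)) < 1 := by
  rw [evalInfty, dif_pos hx]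
  exact (exists_valuation_sub_C_lt_one hx).choose_spec

lemma evalInfty_eq {x : Kq} {c : ℂ} (h : v∞ (x - RatFunc.C c) < 1) : evalInfty x = c := by
  have hx : memKinf x := by
    rw [← valuation_le_one_iff_memKinf, ← sub_add_cancel x (RatFunc.C c)]
    exact Valuation.map_add_le _ h.le (valuation_C_le_one c)
  exact eq_of_valuation_sub_C_lt_one (valuation_sub_C_evalInfty_lt_one hx) h

lemma evalInfty_eq_zero_iff {x : Kq} (hx : memKinf x) : evalInfty x = 0 ↔ memqinvKinf x := by
  rw [← valuation_lt_one_iff_memqinvKinf]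
  constructor
  · intro h
    simpa [h] using valuation_sub_C_evalInfty_lt_one hx
  · intro h
    exact evalInfty_eq (by simpa using h)

lemma evalInfty_mul {x y : Kq} (hx : memKinf x) (hy : memKinf y) :
    evalInfty (x * y) = evalInfty x * evalInfty y := by
  apply evalInfty_eq
  have hsplit : x * y - RatFunc.C (evalInfty x * evalInfty y) =
      (x - RatFunc.C (evalInfty x)) * y +
        RatFunc.C (evalInfty x) * (y - RatFunc.C (evalInfty y)) := by
    rw [map_mul]; ring
  rw [hsplit]
  refine Valuation.map_add_lt _ ?_ ?_ <;> rw [map_mul]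
  · exact mul_lt_one_of_lt_of_le (valuation_sub_C_evalInfty_lt_one hx)
      (valuation_le_one_iff_memKinf.mpr hy)
  · rw [mul_comm]
    exact mul_lt_one_of_lt_of_le (valuation_sub_C_evalInfty_lt_one hy) (valuation_C_le_one _)

lemma evalInfty_sum {ι : Type*} {s : Finset ι} {f : ι → Kq} (hf : ∀ i ∈ s, memKinf (f i)) :
    evalInfty (∑ i ∈ s, f i) = ∑ i ∈ s, evalInfty (f i) := by
  apply evalInfty_eq
  rw [map_sum, ← Finset.sum_sub_distrib]
  exact Valuation.map_sum_lt _ one_ne_zero fun i hi => valuation_sub_C_evalInfty_lt_one (hf i hi)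

lemma evalInfty_qconj {x : Kq} (hx : memKinf x) :
    evalInfty (qconj x) = starRingEnd ℂ (evalInfty x) := by
  apply evalInfty_eq
  rw [← qconj_C, ← map_sub, valuation_qconj]
  exact valuation_sub_C_evalInfty_lt_one hx

lemma evalInfty_one : evalInfty 1 = 1 :=
  evalInfty_eq (by simp)

lemma memKinf_of_memqinvKinf_sub_C {x : Kq} {c : ℂ} (h : memqinvKinf (x - RatFunc.C c)) :
    memKinf x := by
  rw [← valuation_lt_one_iff_memqinvKinf] at h
  rw [← valuation_le_one_iff_memKinf, ← sub_add_cancel x (RatFunc.C c)]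
  exact Valuation.map_add_le _ h.le (valuation_C_le_one c)

end ValuationAtInfinity

/-- The condition on the Gram matrix of an almost orthonormal family. -/
def IsAlmostIdentity {ι : Type*} [DecidableEq ι] (G : ι → ι → Kq) : Prop :=
  ∀ i j, memqinvKinf (G i j - RatFunc.C (if i = j then 1 else 0))

namespace IsAlmostIdentity

variable {ι : Type*} [DecidableEq ι] {G : ι → ι → Kq}

lemma of_lcoef (hdiag : ∀ i, lcoef (G i i) = 1 ∧ (G i i).intDegree = 0)
    (hoff : ∀ i j, i ≠ j → memqinvKinf (G i j)) : IsAlmostIdentity G := by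
  intro i j
  rcases eq_or_ne i j with rfl | hij
  · rw [if_pos rfl, ← (hdiag i).1, ← valuation_lt_one_iff_memqinvKinf]
    exact valuation_sub_C_lcoef_lt_one (hdiag i).2
  · simpa [hij] using hoff i j hij

lemma memKinf (hG : IsAlmostIdentity G) (i j : ι) : memKinf (G i j) :=
  memKinf_of_memqinvKinf_sub_C (hG i j)

lemma evalInfty (hG : IsAlmostIdentity G) (i j : ι) :
    evalInfty (G i j) = if i = j then 1 else 0 :=
  evalInfty_eq (valuation_lt_one_iff_memqinvKinf.mpr (hG i j))

end IsAlmostIdentity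

section GramForm

variable {ι : Type*} [Fintype ι] {G : ι → ι → Kq} {c : ι → Kq}

def gramForm (G : ι → ι → Kq) (c : ι → Kq) : Kq :=
  ∑ i, ∑ j, c i * (qconj (c j) * G i j)

lemma memKinf_gramForm (hG : ∀ i j, memKinf (G i j)) (hc : ∀ i, memKinf (c i)) :
    memKinf (gramForm G c) :=
  memKinf_sum fun i _ => memKinf_sum fun j _ =>
    memKinf_mul (hc i) (memKinf_mul (memKinf_qconj (hc j)) (hG i j))

variable [DecidableEq ι]

lemma evalInfty_gramForm (hG : IsAlmostIdentity G) (hc : ∀ i, memKinf (c i)) :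
    evalInfty (gramForm G c) = ∑ i, (Complex.normSq (evalInfty (c i)) : ℂ) := by
  have hterm : ∀ i j, memKinf (c i * (qconj (c j) * G i j)) := fun i j =>
    memKinf_mul (hc i) (memKinf_mul (memKinf_qconj (hc j)) (hG.memKinf i j))
  rw [gramForm, evalInfty_sum fun i _ => memKinf_sum fun j _ => hterm i j]
  refine Finset.sum_congr rfl fun i _ => ?_
  rw [evalInfty_sum fun j _ => hterm i j]
  simp_rw [evalInfty_mul (hc _) (memKinf_mul (memKinf_qconj (hc _)) (hG.memKinf _ _)),
    evalInfty_mul (memKinf_qconj (hc _)) (hG.memKinf _ _), evalInfty_qconj (hc _),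
    hG.evalInfty, mul_ite, mul_one, mul_zero, Finset.sum_ite_eq, Finset.mem_univ, if_true,
    Complex.mul_conj]

lemma not_memqinvKinf_gramForm (hG : IsAlmostIdentity G) (hc : ∀ i, memKinf (c i))
    (hne : ∃ i, evalInfty (c i) ≠ 0) : ¬ memqinvKinf (gramForm G c) := by
  have hpos : 0 < ∑ i, Complex.normSq (evalInfty (c i)) := by
    obtain ⟨i, hi⟩ := hne
    exact Finset.sum_pos' (fun j _ => Complex.normSq_nonneg _)
      ⟨i, Finset.mem_univ i, Complex.normSq_pos.mpr hi⟩
  have heval : evalInfty (gramForm G c) ≠ 0 := by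
    rw [evalInfty_gramForm hG hc, ← Complex.ofReal_sum]
    exact Complex.ofReal_ne_zero.mpr hpos.ne'
  rwa [Ne, evalInfty_eq_zero_iff (memKinf_gramForm hG.memKinf hc)] at heval

end GramForm

section Sesquilinear

variable {V : Type*} [AddCommGroup V] [Module Kq V] {B : V → V → Kq}
  (hlin : ∀ (a b : Kq) (u v w : V), B (a • u + b • v) w = a * B u w + b * B v w)
  (hsymm : ∀ u v : V, B v u = qconj (B u v))
include hlin

lemma sesq_smul_left (t : Kq) (v w : V) : B (t • v) w = t * B v w := by
  simpa using hlin t 0 v v w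

lemma sesq_sum_smul_left {ι : Type*} (s : Finset ι) (c : ι → Kq) (x : ι → V) (w : V) :
    B (∑ i ∈ s, c i • x i) w = ∑ i ∈ s, c i * B (x i) w := by
  classical
  induction s using Finset.induction_on with
  | empty => simpa using sesq_smul_left hlin 0 0 w
  | insert i s hi ih =>
    rw [Finset.sum_insert hi, Finset.sum_insert hi, ← ih]
    simpa using hlin (c i) 1 (x i) (∑ j ∈ s, c j • x j) w

include hsymm

lemma sesq_smul_smul (t : Kq) (v : V) : B (t • v) (t • v) = t * qconj t * B v v := by
  rw [sesq_smul_left hlin, hsymm, sesq_smul_left hlin, map_mul, ← hsymm, mul_assoc]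

lemma sesq_sum_smul_sum_smul {ι : Type*} [Fintype ι] (c : ι → Kq) (x : ι → V) :
    B (∑ i, c i • x i) (∑ i, c i • x i) = gramForm (fun i j => B (x i) (x j)) c := by
  rw [sesq_sum_smul_left hlin]
  refine Finset.sum_congr rfl fun i _ => ?_
  rw [hsymm, sesq_sum_smul_left hlin, map_sum, Finset.mul_sum]
  simp_rw [map_mul, ← hsymm]

lemma memKinf_sesq_self_of_memKinf {ι : Type*} [Fintype ι] {x : ι → V}
    (hx : ∀ i j, memKinf (B (x i) (x j))) {c : ι → Kq} (hc : ∀ i, memKinf (c i)) :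
    memKinf (B (∑ i, c i • x i) (∑ i, c i • x i)) := by
  rw [sesq_sum_smul_sum_smul hlin hsymm]
  exact memKinf_gramForm hx hc

section

open scoped Classical

local notation "v∞" => inftyValuation ℂ

lemma memKinf_repr_of_memKinf_sesq_self {ι : Type*} [Fintype ι] [DecidableEq ι]
    (b : Module.Basis ι Kq V) (hb : IsAlmostIdentity fun i j => B (b i) (b j)) {v : V}
    (hv : memKinf (B v v)) (i : ι) : memKinf (b.repr v i) := by
  set c : ι → Kq := ⇑(b.repr v)
  by_contra hi
  obtain ⟨k, -, hk⟩ :=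
    Finset.exists_max_image Finset.univ (fun j => v∞ (c j)) ⟨i, Finset.mem_univ i⟩
  have hck : 1 < v∞ (c k) :=
    (not_le.mp (mt valuation_le_one_iff_memKinf.mp hi)).trans_le (hk i (Finset.mem_univ i))
  have hck0 : c k ≠ 0 := by
    rintro h
    simp [h] at hck
  set t := (c k)⁻¹
  have ht : v∞ t < 1 := by
    rw [map_inv₀]
    exact inv_lt_one_of_one_lt₀ hck
  have hcoef : ∀ j, memKinf (t * c j) := fun j => by
    rw [← valuation_le_one_iff_memKinf, map_mul, map_inv₀]
    exact inv_mul_le_one_of_le₀ (hk j (Finset.mem_univ j)) zero_le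
  have hscaled : ¬ memqinvKinf (B (t • v) (t • v)) := by
    rw [← b.sum_repr v, Finset.smul_sum]
    simp_rw [smul_smul]
    rw [sesq_sum_smul_sum_smul hlin hsymm]
    refine not_memqinvKinf_gramForm hb hcoef ⟨k, ?_⟩
    rw [inv_mul_cancel₀ hck0, evalInfty_one]
    exact one_ne_zero
  apply hscaled
  rw [← valuation_lt_one_iff_memqinvKinf, sesq_smul_smul hlin hsymm, map_mul, map_mul,
    valuation_qconj]
  exact mul_lt_one_of_lt_of_le (mul_lt_one_of_lt_of_le ht ht.le)
    (valuation_le_one_iff_memKinf.mpr hv)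

end

end Sesquilinear

theorem statement2_general (V : Type) [AddCommGroup V] [Module Kq V]
    (B : V → V → Kq)
    (hlin : ∀ (a b : Kq) (u v w : V), B (a • u + b • v) w = a * B u w + b * B v w)
    (hsymm : ∀ u v : V, B v u = qconj (B u v))
    (ι : Type) [Fintype ι] (b : Module.Basis ι Kq V)
    -- each basis vector is almost normal: `lt(b i) = 1`
    (hnorm : ∀ i : ι, lcoef (B (b i) (b i)) = 1 ∧ (B (b i) (b i)).intDegree = 0)
    -- distinct basis vectors are almost orthogonal: `(b i, b j) ∈ q⁻¹K_∞`
    (horth : ∀ i j : ι, i ≠ j → memqinvKinf (B (b i) (b j))) :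
    {v : V | memKinf (B v v)} =
      {v : V | ∃ c : ι → Kq, (∀ i, memKinf (c i)) ∧ v = ∑ i, c i • b i} := by
  classical
  have hb : IsAlmostIdentity fun i j => B (b i) (b j) := .of_lcoef hnorm horth
  ext v
  constructor
  · intro hv
    exact ⟨b.repr v, memKinf_repr_of_memKinf_sesq_self hlin hsymm b hb hv, (b.sum_repr v).symm⟩
  · rintro ⟨c, hc, rfl⟩
    exact memKinf_sesq_self_of_memKinf hlin hsymm hb.memKinf hc

/-- If `B` is an almost orthonormal basis of a finite-dimensional `ℂ(q)`-vector space `V`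
with a Hermitian inner product, then the lattice `L_V = {v : (v,v) ∈ K_∞}` equals the
`K_∞`-span of `B`. -/
theorem statement2 (V : Type) [AddCommGroup V] [Module Kq V] [FiniteDimensional Kq V]
    (B : V → V → Kq)
    (hlin : ∀ (a b : Kq) (u v w : V), B (a • u + b • v) w = a * B u w + b * B v w)
    (hsymm : ∀ u v : V, B v u = qconj (B u v))
    (hpos : ∀ v : V, (lcoef (B v v)).im = 0 ∧ 0 ≤ (lcoef (B v v)).re)
    (hdef : ∀ v : V, lcoef (B v v) = 0 → v = 0)
    (heven : ∀ v : V, B v v ≠ 0 → Even (B v v).intDegree)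
    (ι : Type) [Fintype ι] (b : Module.Basis ι Kq V)
    -- each basis vector is almost normal: `lt(b i) = 1`
    (hnorm : ∀ i : ι, lcoef (B (b i) (b i)) = 1 ∧ (B (b i) (b i)).intDegree = 0)
    -- distinct basis vectors are almost orthogonal: `(b i, b j) ∈ q⁻¹K_∞`
    (horth : ∀ i j : ι, i ≠ j → memqinvKinf (B (b i) (b j))) :
    {v : V | memKinf (B v v)} =
      {v : V | ∃ c : ι → Kq, (∀ i, memKinf (c i)) ∧ v = ∑ i, c i • b i} :=
  statement2_general V B hlin hsymm ι b hnorm horth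

end
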